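/- Suppose ∫₀^∞ (1/a(x))·exp(−2B(x)) dx = ∞. For l ≥ 0 define Ω⁺_l(b,a) = sup_{x>l} ( ∫_lˣ (1/a(y))·exp(−2B(y)) dy ) · ( ∫ₓ^∞ exp(2B(y)) dy ) ∈ [0,∞], and define Ω̂⁺(b,a) = limsup_{x→∞} ( ∫₀ˣ (1/a(y))·exp(−2B(y)) dy ) · ( ∫ₓ^∞ exp(2B(y)) dy ) ∈ [0,∞]. Then lim_{l→∞} Ω⁺_l(b,a) = Ω̂⁺(b,a). -/

import Mathlib

open MeasureTheory Set Filter
open scoped ENNReal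

/-- `B(x) = ∫₀ˣ (b/a)(y) dy`. -/
noncomputable def Bfun (a b : ℝ → ℝ) (x : ℝ) : ℝ := ∫ y in (0:ℝ)..x, b y / a y

/-- `Ω⁺_l(b,a) = sup_{x>l} (∫_lˣ (1/a) e^{-2B}) (∫ₓ^∞ e^{2B}) ∈ [0,∞]`. -/
noncomputable def OmegaPlusL (a b : ℝ → ℝ) (l : ℝ) : ℝ≥0∞ :=
  ⨆ x ∈ Ioi l,
    ENNReal.ofReal (∫ y in l..x, (a y)⁻¹ * Real.exp (-2 * Bfun a b y)) *
      ∫⁻ y in Ioi x, ENNReal.ofReal (Real.exp (2 * Bfun a b y))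

/-- `Ω̂⁺(b,a) = limsup_{x→∞} (∫₀ˣ (1/a) e^{-2B}) (∫ₓ^∞ e^{2B}) ∈ [0,∞]`. -/
noncomputable def OmegaHatPlus (a b : ℝ → ℝ) : ℝ≥0∞ :=
  Filter.limsup
    (fun x : ℝ =>
      ENNReal.ofReal (∫ y in (0:ℝ)..x, (a y)⁻¹ * Real.exp (-2 * Bfun a b y)) *
        ∫⁻ y in Ioi x, ENNReal.ofReal (Real.exp (2 * Bfun a b y)))
    Filter.atTop

/-!
Splitting `∫₀ˣ = ∫₀ˡ + ∫ₗˣ` gives `Ω⁺_l ≤ sup_{x ≥ l} (∫₀ˣ e^{-2B}/a) (∫ₓ^∞ e^{2B})`, and these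
suprema decrease to `Ω̂⁺` as `l → ∞`. Conversely, for `x > l` the same splitting gives
`(∫₀ˣ e^{-2B}/a) (∫ₓ^∞ e^{2B}) ≤ (∫₀ˡ e^{-2B}/a) (∫ₓ^∞ e^{2B}) + Ω⁺_l`. As `e^{2B}` is locally
integrable, the tail `∫ₓ^∞ e^{2B}` is either infinite for all `x ≥ 0`, and then `Ω⁺_l = Ω̂⁺ = ∞`,
or it tends to `0`, and then `Ω̂⁺ ≤ Ω⁺_l`.
-/

open scoped Topology

section

variable {f : ℝ → ℝ} {g : ℝ → ℝ≥0∞}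

lemma intervalIntegrable_of_integrableOn_Icc_zero (hf_int : ∀ x, IntegrableOn f (Icc 0 x))
    {s t : ℝ} (hs : 0 ≤ s) (hst : s ≤ t) : IntervalIntegrable f volume s t :=
  (intervalIntegrable_iff_integrableOn_Icc_of_le hst).2
    ((hf_int t).mono_set (Icc_subset_Icc_left hs))

lemma ofReal_intervalIntegral_add_of_nonneg
    (hf_int : ∀ x, IntegrableOn f (Icc 0 x)) (hf_nonneg : ∀ x ∈ Ici (0 : ℝ), 0 ≤ f x)
    {l x : ℝ} (hl : 0 ≤ l) (hlx : l ≤ x) :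
    ENNReal.ofReal (∫ y in (0 : ℝ)..x, f y) =
      ENNReal.ofReal (∫ y in (0 : ℝ)..l, f y) + ENNReal.ofReal (∫ y in l..x, f y) := by
  have hnonneg : ∀ {s t : ℝ}, 0 ≤ s → s ≤ t → 0 ≤ ∫ y in s..t, f y := fun {s t} hs hst =>
    intervalIntegral.integral_nonneg hst fun y hy => hf_nonneg y (hs.trans hy.1)
  rw [← intervalIntegral.integral_add_adjacent_intervals
    (intervalIntegrable_of_integrableOn_Icc_zero hf_int le_rfl hl)
    (intervalIntegrable_of_integrableOn_Icc_zero hf_int hl hlx),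
    ENNReal.ofReal_add (hnonneg le_rfl hl) (hnonneg hl hlx)]

lemma biSup_Ioi_le_biSup_Ici
    (hf_int : ∀ x, IntegrableOn f (Icc 0 x)) (hf_nonneg : ∀ x ∈ Ici (0 : ℝ), 0 ≤ f x)
    {l : ℝ} (hl : 0 ≤ l) :
    ⨆ x ∈ Ioi l, ENNReal.ofReal (∫ y in l..x, f y) * g x ≤
      ⨆ x ∈ Ici l, ENNReal.ofReal (∫ y in (0 : ℝ)..x, f y) * g x := by
  refine iSup₂_mono' fun x hx => ⟨x, mem_Ici_of_Ioi hx, ?_⟩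
  rw [ofReal_intervalIntegral_add_of_nonneg hf_int hf_nonneg hl (le_of_lt hx)]
  gcongr
  exact le_add_self

lemma limsup_le_biSup_Ioi_of_tendsto_zero
    (hf_int : ∀ x, IntegrableOn f (Icc 0 x)) (hf_nonneg : ∀ x ∈ Ici (0 : ℝ), 0 ≤ f x)
    (hg : Tendsto g atTop (𝓝 0)) {l : ℝ} (hl : 0 ≤ l) :
    limsup (fun x => ENNReal.ofReal (∫ y in (0 : ℝ)..x, f y) * g x) atTop ≤
      ⨆ x ∈ Ioi l, ENNReal.ofReal (∫ y in l..x, f y) * g x := by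
  refine ENNReal.le_of_forall_pos_le_add fun ε hε _ => ?_
  have hhead : ∀ᶠ x in atTop, ENNReal.ofReal (∫ y in (0 : ℝ)..l, f y) * g x < ε := by
    refine (ENNReal.Tendsto.const_mul hg (Or.inr ENNReal.ofReal_ne_top)).eventually_lt_const ?_
    simpa using hε
  refine limsup_le_of_le (by isBoundedDefault) ?_
  filter_upwards [hhead, eventually_gt_atTop l] with x hx_head hlx
  rw [ofReal_intervalIntegral_add_of_nonneg hf_int hf_nonneg hl hlx.le, add_mul, add_comm]
  exact add_le_add (le_iSup₂_of_le x hlx le_rfl) hx_head.le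

lemma biSup_Ioi_eq_top
    (hf_int : ∀ x, IntegrableOn f (Icc 0 x)) (hf_pos : ∀ x ∈ Ici (0 : ℝ), 0 < f x)
    (hg : ∀ x ∈ Ici (0 : ℝ), g x = ⊤) {l : ℝ} (hl : 0 ≤ l) :
    ⨆ x ∈ Ioi l, ENNReal.ofReal (∫ y in l..x, f y) * g x = ⊤ := by
  have hpos : 0 < ∫ y in l..l + 1, f y :=
    intervalIntegral.intervalIntegral_pos_of_pos_on
      (intervalIntegrable_of_integrableOn_Icc_zero hf_int hl (by linarith))
      (fun y hy => hf_pos y (hl.trans hy.1.le)) (lt_add_one l)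
  refine eq_top_iff.2 (le_iSup₂_of_le (l + 1) (lt_add_one l) ?_)
  rw [hg (l + 1) (by rw [mem_Ici]; linarith), ENNReal.mul_top (by simpa using hpos)]

theorem tendsto_biSup_Ioi_limsup
    (hf_int : ∀ x, IntegrableOn f (Icc 0 x)) (hf_pos : ∀ x ∈ Ici (0 : ℝ), 0 < f x)
    (hg : (∀ x ∈ Ici (0 : ℝ), g x = ⊤) ∨ Tendsto g atTop (𝓝 0)) :
    Tendsto (fun l => ⨆ x ∈ Ioi l, ENNReal.ofReal (∫ y in l..x, f y) * g x) atTop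
      (𝓝 (limsup (fun x => ENNReal.ofReal (∫ y in (0 : ℝ)..x, f y) * g x) atTop)) := by
  set u := fun x => ENNReal.ofReal (∫ y in (0 : ℝ)..x, f y) * g x
  have hf_nonneg : ∀ x ∈ Ici (0 : ℝ), 0 ≤ f x := fun x hx => (hf_pos x hx).le
  have hupper : Tendsto (fun l => ⨆ x ∈ Ici l, u x) atTop (𝓝 (limsup u atTop)) := by
    rw [atTop_basis.limsup_eq_iInf_iSup]
    simp only [ciInf_const]
    exact tendsto_atTop_iInf fun l l' hll' => biSup_mono fun x hx => hll'.trans hx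
  refine tendsto_of_tendsto_of_tendsto_of_le_of_le' tendsto_const_nhds hupper ?_ ?_
  · filter_upwards [eventually_ge_atTop 0] with l hl
    rcases hg with hg_top | hg_zero
    · rw [biSup_Ioi_eq_top hf_int hf_pos hg_top hl]
      exact le_top
    · exact limsup_le_biSup_Ioi_of_tendsto_zero hf_int hf_nonneg hg_zero hl
  · filter_upwards [eventually_ge_atTop 0] with l hl
    exact biSup_Ioi_le_biSup_Ici hf_int hf_nonneg hl

end

theorem measure_Ioi_eq_top_or_tendsto_zero (μ : Measure ℝ) (hμ : ∀ x, μ (Ioc 0 x) ≠ ∞) :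
    (∀ x ∈ Ici (0 : ℝ), μ (Ioi x) = ∞) ∨ Tendsto (fun x => μ (Ioi x)) atTop (𝓝 0) := by
  by_cases h0 : μ (Ioi 0) = ∞
  · refine Or.inl fun x hx => ?_
    by_contra hx_fin
    have hcover : μ (Ioi 0) ≤ μ (Ioc 0 x) + μ (Ioi x) := by
      rw [← Ioc_union_Ioi_eq_Ioi hx]
      exact measure_union_le _ _
    exact ENNReal.add_ne_top.2 ⟨hμ x, hx_fin⟩ (top_le_iff.1 (h0 ▸ hcover))
  · right
    have h := tendsto_measure_iInter_atTop (μ := μ) (fun x => measurableSet_Ioi.nullMeasurableSet)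
      (fun x y hxy => Ioi_subset_Ioi hxy) ⟨0, h0⟩
    have hempty : ⋂ x : ℝ, Ioi x = ∅ := iInter_eq_empty_iff.2 fun x => ⟨x, lt_irrefl x⟩
    rwa [hempty, measure_empty] at h

lemma continuousOn_Icc_Bfun {a b : ℝ → ℝ} (hba : ContinuousOn (fun y => b y / a y) (Ici 0))
    (x : ℝ) : ContinuousOn (Bfun a b) (Icc 0 x) := by
  rcases le_or_gt 0 x with hx | hx
  · rw [← uIcc_of_le hx]
    exact intervalIntegral.continuousOn_primitive_interval
      ((hba.mono (uIcc_of_le hx ▸ Icc_subset_Ici_self)).integrableOn_compact isCompact_uIcc)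
  · rw [Icc_eq_empty hx.not_ge]
    exact continuousOn_empty _

theorem stmt15_general (a b : ℝ → ℝ)
    (ha : ContDiffOn ℝ 1 a (Ici 0)) (hapos : ∀ x ∈ Ici (0:ℝ), 0 < a x)
    (hb : ContinuousOn b (Ici 0)) :
    Tendsto (fun l => OmegaPlusL a b l) atTop (nhds (OmegaHatPlus a b)) := by
  have ha_ne : ∀ x ∈ Ici (0:ℝ), a x ≠ 0 := fun x hx => (hapos x hx).ne'
  have hB := continuousOn_Icc_Bfun (hb.div ha.continuousOn ha_ne)
  have hf_int : ∀ x, IntegrableOn (fun y => (a y)⁻¹ * Real.exp (-2 * Bfun a b y)) (Icc 0 x) :=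
    fun x => ContinuousOn.integrableOn_Icc <|
      ((ha.continuousOn.mono Icc_subset_Ici_self).inv₀ fun y hy => ha_ne y hy.1).mul
        (Real.continuous_exp.comp_continuousOn ((hB x).const_mul _))
  have hf_pos : ∀ x ∈ Ici (0:ℝ), 0 < (a x)⁻¹ * Real.exp (-2 * Bfun a b x) :=
    fun x hx => mul_pos (inv_pos.2 (hapos x hx)) (Real.exp_pos _)
  set μ := volume.withDensity fun y => ENNReal.ofReal (Real.exp (2 * Bfun a b y))
  have hμ : ∀ x, μ (Ioc 0 x) ≠ ∞ := fun x => by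
    rw [withDensity_apply _ measurableSet_Ioc]
    exact ((Real.continuous_exp.comp_continuousOn ((hB x).const_mul _)).integrableOn_Icc.mono_set
      Ioc_subset_Icc_self).lintegral_lt_top.ne
  have hg := measure_Ioi_eq_top_or_tendsto_zero μ hμ
  simp only [μ, withDensity_apply _ measurableSet_Ioi] at hg
  exact tendsto_biSup_Ioi_limsup hf_int hf_pos hg

theorem stmt15 (a b : ℝ → ℝ)
    (ha : ContDiffOn ℝ 1 a (Ici 0)) (hapos : ∀ x ∈ Ici (0:ℝ), 0 < a x)
    (hb : ContinuousOn b (Ici 0))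
    (hinf : ∫⁻ x in Ioi (0:ℝ),
        ENNReal.ofReal ((a x)⁻¹ * Real.exp (-2 * Bfun a b x)) = ⊤) :
    Tendsto (fun l => OmegaPlusL a b l) atTop (nhds (OmegaHatPlus a b)) :=
  stmt15_general a b ha hapos hb
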